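/- arXiv:2005.08095 — 2 statements merged into one kernel-verified Lean document; each statement's English description precedes it below -/
import Mathlib

section
/- If G is a connected graph and d ≥ 2 an integer, then gp_d(G) ≥ ω(G_SR^d), where G_SR^d is the strong d-resolving graph of G. -/
/-- `S` is a general `d`-position set of `G`: no three distinct vertices of `S`
lie on a common geodesic of length at most `d`. -/
def IsGenDPos {V : Type*} (G : SimpleGraph V) (d : ℕ) (S : Set V) : Prop :=
  ∀ ⦃u v w : V⦄, u ∈ S → v ∈ S → w ∈ S → u ≠ v → u ≠ w → v ≠ w →
    G.dist u v + G.dist v w = G.dist u w → G.dist u w ≤ d → False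

/-- The general `d`-position number of `G`. -/
noncomputable def gpNum {V : Type*} (G : SimpleGraph V) (d : ℕ) : ℕ :=
  sSup {n | ∃ S : Set V, IsGenDPos G d S ∧ S.ncard = n}

/-- u is maximally distant from v in G. -/
def MaxDistant {V : Type*} (G : SimpleGraph V) (u v : V) : Prop :=
  ∀ w, G.Adj u w → G.dist v w ≤ G.dist v u

/-- u and v are mutually maximally distant in G. -/
def MMD {V : Type*} (G : SimpleGraph V) (u v : V) : Prop :=
  MaxDistant G u v ∧ MaxDistant G v u

/-- The strong d-resolving graph of G. -/
def strongResolvingGraph {V : Type*} (G : SimpleGraph V) (d : ℕ) : SimpleGraph V where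
  Adj u v := u ≠ v ∧ (MMD G u v ∨ d ≤ G.dist u v)
  symm := by
    refine ⟨?_⟩
    rintro u v ⟨huv, h | h⟩
    · exact ⟨huv.symm, Or.inl ⟨h.2, h.1⟩⟩
    · exact ⟨huv.symm, Or.inr (by rwa [SimpleGraph.dist_comm])⟩
  loopless := by refine ⟨?_⟩; rintro u ⟨h, -⟩; exact h rfl


/-!
A clique of the strong `d`-resolving graph is a general `d`-position set. Suppose `v` lay strictly
inside a geodesic from `u` to `w` of length at most `d`. Then `u, v` are not at distance `≥ d`, so
they are mutually maximally distant; but the neighbour of `v` on a geodesic towards `w` is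
farther from `u` than `v` is, so `v` is not maximally distant from `u`.
-/

namespace SimpleGraph

variable {V : Type*} {G : SimpleGraph V} {u v w : V}

theorem Reachable.exists_adj_dist_lt (h : G.Reachable v w) (hne : v ≠ w) :
    ∃ x, G.Adj v x ∧ G.dist x w < G.dist v w := by
  obtain ⟨p, hp⟩ := h.exists_walk_length_eq_dist
  cases p with
  | nil => exact absurd rfl hne
  | @cons _ x _ hadj q =>
    refine ⟨x, hadj, ?_⟩
    have := dist_le q
    rw [Walk.length_cons] at hp
    omega

end SimpleGraph

section

variable {V : Type*} {G : SimpleGraph V}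

theorem MaxDistant.dist_add_dist_ne {u v w : V} (hv : MaxDistant G v u) (hvw : G.Reachable v w)
    (hne : v ≠ w) :
    G.dist u v + G.dist v w ≠ G.dist u w := by
  obtain ⟨x, hx, hxw⟩ := hvw.exists_adj_dist_lt hne
  have hux : G.dist u x ≤ G.dist u v := hv x hx
  have htri : G.dist u w ≤ G.dist u x + G.dist x w :=
    (hx.reachable.symm.trans hvw).dist_triangle_right u
  omega

theorem isGenDPos_of_isClique_strongResolvingGraph (hG : G.Connected) {d : ℕ} {S : Set V}
    (hS : (strongResolvingGraph G d).IsClique S) :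
    IsGenDPos G d S := by
  intro u v w hu hv _ huv _ hvw hsum hle
  obtain ⟨-, hmmd | hfar⟩ := hS hu hv huv
  · exact hmmd.2.dist_add_dist_ne (hG v w) hvw hsum
  · have := hG.pos_dist_of_ne hvw
    omega

theorem IsGenDPos.ncard_le_gpNum [Finite V] {d : ℕ} {S : Set V} (hS : IsGenDPos G d S) :
    S.ncard ≤ gpNum G d :=
  le_csSup ⟨Nat.card V, by rintro _ ⟨T, -, rfl⟩; exact Set.ncard_le_card T⟩ ⟨S, hS, rfl⟩

end

theorem stmt_11_general {V : Type*} [Finite V] (G : SimpleGraph V) (hG : G.Connected)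
    (d : ℕ) :
    (strongResolvingGraph G d).cliqueNum ≤ gpNum G d := by
  obtain ⟨s, hs⟩ := (strongResolvingGraph G d).exists_isNClique_cliqueNum
  rw [← hs.card_eq, ← Set.ncard_coe_finset]
  exact (isGenDPos_of_isClique_strongResolvingGraph hG hs.isClique).ncard_le_gpNum

/-- gp_d(G) is at least the clique number of the strong d-resolving graph. -/
theorem stmt_11 {V : Type*} [Finite V] (G : SimpleGraph V) (hG : G.Connected)
    (d : ℕ) (hd : 2 ≤ d) :
    (strongResolvingGraph G d).cliqueNum ≤ gpNum G d :=
  stmt_11_general G hG d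
end

section
/- If G is a triangle-free connected graph, then a set S ⊆ V(G) is a general 2-position set if and only if S is a dissociation set; consequently gp_2(G) = diss(G). -/
/-- S is a dissociation set: the subgraph induced by S has maximum degree at most 1. -/
def IsDissociation {V : Type*} (G : SimpleGraph V) (S : Set V) : Prop :=
  ∀ v ∈ S, {u | u ∈ S ∧ G.Adj v u}.Subsingleton

/-- The dissociation number of G. -/
noncomputable def dissNum {V : Type*} (G : SimpleGraph V) : ℕ :=
  sSup {n | ∃ S : Set V, IsDissociation G S ∧ S.ncard = n}

/-! In a triangle-free graph two distinct neighbours of a vertex are at distance exactly 2, so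
they and their common neighbour lie on a geodesic of length 2; conversely, in a connected graph
a geodesic of length at most 2 through three distinct vertices consists of two edges at its
middle vertex. Hence both conditions forbid exactly a vertex of `S` with two neighbours in `S`. -/

namespace SimpleGraph

variable {V : Type*} {G : SimpleGraph V} {u v w : V}

lemma dist_eq_two_of_adj_of_adj (hvu : G.Adj v u) (hvw : G.Adj v w) (hne : u ≠ w)
    (hnadj : ¬G.Adj u w) : G.dist u w = 2 := by
  have hv : v ∈ G.commonNeighbors u w := G.mem_commonNeighbors.mpr ⟨hvu.symm, hvw.symm⟩
  rw [dist, edist_eq_two_iff.mpr ⟨hne, hnadj, v, hv⟩]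
  rfl

lemma CliqueFree.not_adj_of_adj_of_adj (htf : G.CliqueFree 3) (hvu : G.Adj v u)
    (hvw : G.Adj v w) : ¬G.Adj u w := fun huw ↦ by
  classical
  exact htf {u, v, w} (is3Clique_triple_iff.mpr ⟨hvu.symm, huw, hvw⟩)

end SimpleGraph

section

open SimpleGraph

variable {V : Type*} {G : SimpleGraph V} {S : Set V}

theorem IsGenDPos.isDissociation {d : ℕ} (htf : G.CliqueFree 3) (hd : 2 ≤ d)
    (hS : IsGenDPos G d S) : IsDissociation G S := by
  rintro v hv u ⟨hu, hvu⟩ w ⟨hw, hvw⟩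
  by_contra hne
  have huw : G.dist u w = 2 :=
    dist_eq_two_of_adj_of_adj hvu hvw hne (htf.not_adj_of_adj_of_adj hvu hvw)
  refine hS hu hv hw hvu.ne.symm hne hvw.ne ?_ (huw ▸ hd)
  rw [dist_eq_one_iff_adj.mpr hvu.symm, dist_eq_one_iff_adj.mpr hvw, huw]

theorem IsDissociation.isGenDPos_two (hG : G.Preconnected) (hS : IsDissociation G S) :
    IsGenDPos G 2 S := by
  intro u v w hu hv hw huv huw hvw hsum hle
  have huv₀ := (hG u v).pos_dist_of_ne huv
  have hvw₀ := (hG v w).pos_dist_of_ne hvw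
  obtain ⟨huv₁, hvw₁⟩ : G.dist u v = 1 ∧ G.dist v w = 1 := by omega
  exact huw (hS v hv ⟨hu, (dist_eq_one_iff_adj.mp huv₁).symm⟩ ⟨hw, dist_eq_one_iff_adj.mp hvw₁⟩)

theorem isGenDPos_two_iff_isDissociation (hG : G.Preconnected) (htf : G.CliqueFree 3) :
    IsGenDPos G 2 S ↔ IsDissociation G S :=
  ⟨IsGenDPos.isDissociation htf le_rfl, IsDissociation.isGenDPos_two hG⟩

end

theorem stmt_13_general {V : Type*} (G : SimpleGraph V) (hG : G.Connected)
    (htf : G.CliqueFree 3) :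
    (∀ S : Set V, IsGenDPos G 2 S ↔ IsDissociation G S) ∧ gpNum G 2 = dissNum G := by
  have hiff (S : Set V) := isGenDPos_two_iff_isDissociation (S := S) hG.preconnected htf
  refine ⟨hiff, ?_⟩
  simp only [gpNum, dissNum, hiff]

/-- In a triangle-free connected graph, general 2-position sets are exactly the
dissociation sets; consequently gp_2(G) = diss(G). -/
theorem stmt_13 {V : Type*} [Finite V] (G : SimpleGraph V) (hG : G.Connected)
    (htf : G.CliqueFree 3) :
    (∀ S : Set V, IsGenDPos G 2 S ↔ IsDissociation G S) ∧ gpNum G 2 = dissNum G :=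
  stmt_13_general G hG htf
end
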